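/- Let u, v be nonzero vectors in R^d with angle θ between them, and let x be drawn uniformly from the unit sphere in R^d (d ≥ 2). Then the probability that sign(u·x) ≠ sign(v·x) equals θ/π. -/

import Mathlib

open MeasureTheory InnerProductGeometry

/-- `sgn t = 1` if `t > 0` and `0` otherwise. -/
noncomputable def sgn (t : ℝ) : ℝ := if 0 < t then 1 else 0

/-- The uniform probability measure on the unit sphere of `EuclideanSpace ℝ (Fin d)`. -/
noncomputable def uniformSphere (d : ℕ) :
    Measure (Metric.sphere (0 : EuclideanSpace ℝ (Fin d)) 1) :=
  ((volume : Measure (EuclideanSpace ℝ (Fin d))).toSphere Set.univ)⁻¹ •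
    (volume : Measure (EuclideanSpace ℝ (Fin d))).toSphere

/-!
The disagreement set `C = {x | sgn ⟪u, x⟫ ≠ sgn ⟪v, x⟫}` is a cone, so its measure under the
uniform distribution on the sphere is the proportion of the unit ball it fills. Membership in `C`
depends only on the orthogonal projection of `x` to the plane spanned by `u` and `v`. In an
orthonormal frame `e₀, e₁` of that plane in which `u` and `v` point at the angles `∓θ/2`, Fubini
over the orthogonal complement reduces this proportion to the planar one. In the plane `C` is a
pair of opposite sectors of total angle `2θ`, whose area inside the unit disk is `θ`, out of `π`.
-/

open Set Metric Real Pointwise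
open scoped ENNReal RealInnerProductSpace symmDiff

theorem sgn_mul_of_pos {c : ℝ} (hc : 0 < c) (t : ℝ) : sgn (c * t) = sgn t := by
  simp only [sgn, mul_pos_iff_of_pos_left hc]

theorem sgn_ne_sgn_iff {a b : ℝ} : sgn a ≠ sgn b ↔ Xor (0 < a) (0 < b) := by
  unfold sgn
  by_cases ha : 0 < a <;> by_cases hb : 0 < b <;> simp [ha, hb]

theorem measurable_sgn : Measurable sgn :=
  Measurable.ite measurableSet_Ioi measurable_const measurable_const

section DisagreementCone

variable {F : Type*} [NormedAddCommGroup F] [InnerProductSpace ℝ F]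

def disagreementCone (u v : F) : Set F := {x | sgn ⟪u, x⟫ ≠ sgn ⟪v, x⟫}

theorem measurableSet_disagreementCone [MeasurableSpace F] [OpensMeasurableSpace F] (u v : F) :
    MeasurableSet (disagreementCone u v) :=
  (measurableSet_eq_fun (measurable_sgn.comp (by fun_prop))
    (measurable_sgn.comp (by fun_prop))).compl

theorem smul_mem_disagreementCone {u v x : F} {c : ℝ} (hc : 0 < c)
    (hx : x ∈ disagreementCone u v) : c • x ∈ disagreementCone u v := by
  simpa [disagreementCone, real_inner_smul_right, sgn_mul_of_pos hc] using hx

theorem zero_notMem_disagreementCone (u v : F) : (0 : F) ∉ disagreementCone u v := by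
  simp [disagreementCone]

theorem disagreementCone_smul_of_pos (u : F) {r : ℝ} (hr : 0 < r) :
    disagreementCone u (r • u) = ∅ := by
  simp [disagreementCone, real_inner_smul_left, sgn_mul_of_pos hr]

theorem disagreementCone_smul_of_neg (u : F) {r : ℝ} (hr : r < 0) :
    disagreementCone u (r • u) = {x | ⟪u, x⟫ ≠ 0} := by
  ext x
  simp only [disagreementCone, mem_ofPred_eq, real_inner_smul_left, sgn_ne_sgn_iff]
  rcases lt_trichotomy ⟪u, x⟫ 0 with h | h | h
  · simp [h.ne, h.not_gt, mul_pos_of_neg_of_neg hr h]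
  · simp [h]
  · simp [h.ne', h, (mul_neg_of_neg_of_pos hr h).not_gt]

theorem disagreementCone_smul_smul (u v : F) {a b : ℝ} (ha : 0 < a) (hb : 0 < b) :
    disagreementCone (a • u) (b • v) = disagreementCone u v := by
  simp [disagreementCone, real_inner_smul_left, sgn_mul_of_pos ha, sgn_mul_of_pos hb]

end DisagreementCone

section Sphere

variable {E : Type*} [NormedAddCommGroup E] [NormedSpace ℝ E]

theorem Ioo_smul_sphere_inter_of_cone {C : Set E} (hC : ∀ c : ℝ, 0 < c → ∀ x ∈ C, c • x ∈ C)
    (h0 : (0 : E) ∉ C) : Ioo (0 : ℝ) 1 • (sphere (0 : E) 1 ∩ C) = C ∩ ball 0 1 := by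
  ext z
  constructor
  · rintro ⟨t, ⟨ht0, ht1⟩, x, ⟨hx, hxC⟩, rfl⟩
    rw [mem_sphere_zero_iff_norm] at hx
    refine ⟨hC t ht0 x hxC, ?_⟩
    rwa [mem_ball_zero_iff, norm_smul, Real.norm_of_nonneg ht0.le, hx, mul_one]
  · rintro ⟨hzC, hz⟩
    have hz0 : z ≠ 0 := fun h => h0 (h ▸ hzC)
    have hpos : 0 < ‖z‖ := norm_pos_iff.mpr hz0
    refine ⟨‖z‖, ⟨hpos, mem_ball_zero_iff.mp hz⟩, ‖z‖⁻¹ • z,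
      ⟨mem_sphere_zero_iff_norm.mpr (norm_smul_inv_norm hz0), hC _ (inv_pos.mpr hpos) z hzC⟩,
      smul_inv_smul₀ hpos.ne' z⟩

variable [MeasurableSpace E] [BorelSpace E]

theorem MeasureTheory.Measure.toSphere_preimage_of_cone (μ : Measure E) {C : Set E}
    (hCm : MeasurableSet C) (hC : ∀ c : ℝ, 0 < c → ∀ x ∈ C, c • x ∈ C) (h0 : (0 : E) ∉ C) :
    μ.toSphere ((↑) ⁻¹' C) = Module.finrank ℝ E * μ (C ∩ ball 0 1) := by
  rw [μ.toSphere_apply' (measurableSet_preimage measurable_subtype_coe hCm),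
    Subtype.image_preimage_coe, Ioo_smul_sphere_inter_of_cone hC h0]

end Sphere

theorem uniformSphere_preimage_of_cone {d : ℕ} (hd : d ≠ 0) {C : Set (EuclideanSpace ℝ (Fin d))}
    (hCm : MeasurableSet C) (hC : ∀ c : ℝ, 0 < c → ∀ x ∈ C, c • x ∈ C) (h0 : 0 ∉ C) :
    uniformSphere d ((↑) ⁻¹' C) =
      volume (C ∩ ball 0 1) / volume (ball (0 : EuclideanSpace ℝ (Fin d)) 1) := by
  rw [uniformSphere, Measure.smul_apply, Measure.toSphere_preimage_of_cone _ hCm hC h0,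
    Measure.toSphere_apply_univ, smul_eq_mul, mul_comm, ← div_eq_mul_inv,
    ENNReal.mul_div_mul_left _ _ (by simpa using hd) (by simp)]

section Slicing

variable {F : Type*} [NormedAddCommGroup F] [NormedSpace ℝ F]

theorem smul_set_eq_of_cone {W : Set F} (hW : ∀ c : ℝ, 0 < c → ∀ x ∈ W, c • x ∈ W) {r : ℝ}
    (hr : 0 < r) : r • W = W := by
  refine (smul_set_subset_iff.mpr fun x hx => hW r hr x hx).antisymm fun x hx => ?_
  exact ⟨r⁻¹ • x, hW _ (inv_pos.mpr hr) x hx, smul_inv_smul₀ hr.ne' x⟩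

variable [MeasurableSpace F] [BorelSpace F] [FiniteDimensional ℝ F] [Nontrivial F]

theorem MeasureTheory.Measure.addHaar_inter_ball_of_cone (μ : Measure F) [μ.IsAddHaarMeasure]
    {W : Set F} (hW : ∀ c : ℝ, 0 < c → ∀ x ∈ W, c • x ∈ W) {r : ℝ} (hr : 0 ≤ r) :
    μ (W ∩ ball 0 r) = ENNReal.ofReal (r ^ Module.finrank ℝ F) * μ (W ∩ ball 0 1) := by
  rcases hr.eq_or_lt with rfl | hr
  · simp [Module.finrank_pos.ne']
  rw [← Measure.addHaar_smul_of_nonneg μ hr.le, smul_set_inter₀ hr.ne', smul_set_eq_of_cone hW hr,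
    smul_unitBall_of_pos hr]

theorem MeasureTheory.Measure.prod_setOf_mem_and_norm_sq_add_lt_one (μ : Measure F)
    [μ.IsAddHaarMeasure] {G : Type*} [MeasurableSpace G] (ν : Measure G) [SFinite ν] {W : Set F}
    (hWm : MeasurableSet W) (hW : ∀ c : ℝ, 0 < c → ∀ x ∈ W, c • x ∈ W) {g : G → ℝ}
    (hg : Measurable g) :
    μ.prod ν {q | q.1 ∈ W ∧ ‖q.1‖ ^ 2 + g q.2 < 1} =
      μ (W ∩ ball 0 1) * ∫⁻ w, ENNReal.ofReal (√(1 - g w) ^ Module.finrank ℝ F) ∂ν := by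
  have hS : MeasurableSet {q : F × G | q.1 ∈ W ∧ ‖q.1‖ ^ 2 + g q.2 < 1} :=
    (hWm.preimage measurable_fst).inter (measurableSet_lt
      ((measurable_fst.norm.pow_const 2).add (hg.comp measurable_snd)) measurable_const)
  have hslice (w : G) : (fun z => (z, w)) ⁻¹' {q : F × G | q.1 ∈ W ∧ ‖q.1‖ ^ 2 + g q.2 < 1} =
      W ∩ ball 0 √(1 - g w) := by
    ext z
    simp [Real.lt_sqrt (norm_nonneg z), lt_sub_iff_add_lt]
  simp_rw [Measure.prod_apply_symm hS, hslice,
    μ.addHaar_inter_ball_of_cone hW (Real.sqrt_nonneg _), mul_comm _ (μ (W ∩ ball 0 1))]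
  exact lintegral_const_mul _ ((hg.const_sub 1).sqrt.pow_const _).ennreal_ofReal

end Slicing

section PlaneCoord

variable {E : Type*} [NormedAddCommGroup E] [InnerProductSpace ℝ E]

def planeCoord (e : Fin 2 → E) (x : E) : ℂ := ⟨⟪e 0, x⟫, ⟪e 1, x⟫⟩

theorem inner_planeCoord (e : Fin 2 → E) (a : ℂ) (x : E) :
    ⟪a, planeCoord e x⟫ = ⟪a.re • e 0 + a.im • e 1, x⟫ := by
  simp [planeCoord, Complex.inner, inner_add_left, real_inner_smul_left]
  ring

theorem preimage_planeCoord_disagreementCone (e : Fin 2 → E) (a b : ℂ) :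
    planeCoord e ⁻¹' disagreementCone a b =
      disagreementCone (a.re • e 0 + a.im • e 1) (b.re • e 0 + b.im • e 1) := by
  simp only [disagreementCone, preimage_ofPred_eq, inner_planeCoord]

theorem exists_orthonormal_of_inner_eq_cos_two_mul {x y : E} (hx : ‖x‖ = 1) (hy : ‖y‖ = 1)
    {α : ℝ} (hα₀ : 0 < α) (hα : α < π / 2) (hxy : ⟪x, y⟫ = cos (2 * α)) :
    ∃ e : Fin 2 → E, Orthonormal ℝ e ∧
      x = cos α • e 0 - sin α • e 1 ∧ y = cos α • e 0 + sin α • e 1 := by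
  have hc : 0 < cos α := cos_pos_of_mem_Ioo ⟨by linarith, hα⟩
  have hs : 0 < sin α := sin_pos_of_pos_of_lt_pi hα₀ (by linarith)
  have hcs := cos_sq_add_sin_sq α
  rw [cos_two_mul] at hxy
  -- The diagonals `x + y` and `y - x` of the rhombus spanned by `x` and `y` are orthogonal,
  -- of lengths `2 cos α` and `2 sin α`.
  refine ⟨![(2 * cos α)⁻¹ • (x + y), (2 * sin α)⁻¹ • (y - x)], ?_, ?_, ?_⟩
  · rw [orthonormal_iff_ite]
    simp only [Fin.forall_fin_two, Matrix.cons_val_zero, Matrix.cons_val_one, real_inner_smul_left,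
      real_inner_smul_right, inner_add_left, inner_add_right, inner_sub_left, inner_sub_right,
      real_inner_self_eq_norm_sq, hx, hy, real_inner_comm x y, hxy]
    field_simp
    norm_num
    exact ⟨by ring, by linear_combination (-4) * hcs⟩
  all_goals
    simp only [Matrix.cons_val_zero, Matrix.cons_val_one]
    match_scalars <;> field_simp <;> ring

theorem exists_disagreementCone_eq_preimage_planeCoord {u v : E} (hu : u ≠ 0) (hv : v ≠ 0)
    (h₀ : 0 < angle u v) (hπ : angle u v < π) :
    ∃ e : Fin 2 → E, Orthonormal ℝ e ∧ disagreementCone u v = planeCoord e ⁻¹'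
      disagreementCone (⟨cos (angle u v / 2), -sin (angle u v / 2)⟩ : ℂ)
        ⟨cos (angle u v / 2), sin (angle u v / 2)⟩ := by
  have hinner : ⟪‖u‖⁻¹ • u, ‖v‖⁻¹ • v⟫ = cos (2 * (angle u v / 2)) := by
    rw [mul_div_cancel₀ _ two_ne_zero, cos_angle, real_inner_smul_left, real_inner_smul_right]
    field_simp
  have hunit {w : E} (hw : w ≠ 0) : ‖‖w‖⁻¹ • w‖ = 1 := norm_smul_inv_norm (𝕜 := ℝ) hw
  obtain ⟨e, he, hxe, hye⟩ := exists_orthonormal_of_inner_eq_cos_two_mul (hunit hu) (hunit hv)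
    (by linarith) (by linarith) hinner
  refine ⟨e, he, ?_⟩
  rw [preimage_planeCoord_disagreementCone, ← disagreementCone_smul_smul u v
    (inv_pos.mpr (norm_pos_iff.mpr hu)) (inv_pos.mpr (norm_pos_iff.mpr hv)), hxe, hye, neg_smul,
    sub_eq_add_neg]

variable [FiniteDimensional ℝ E] [MeasurableSpace E] [BorelSpace E]

theorem exists_measurePreserving_planeCoord_prod {e : Fin 2 → E} (he : Orthonormal ℝ e) :
    ∃ (k : ℕ) (Ψ : E ≃ᵐ ℂ × (Fin k → ℝ)), MeasurePreserving Ψ ∧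
      ∀ x, (Ψ x).1 = planeCoord e x ∧ ‖x‖ ^ 2 = ‖planeCoord e x‖ ^ 2 + ∑ i, (Ψ x).2 i ^ 2 := by
  set k := Module.finrank ℝ E - 2
  have hcard : Module.finrank ℝ E = Fintype.card (Fin 2 ⊕ Fin k) := by
    have := he.linearIndependent.fintype_card_le_finrank
    simp only [Fintype.card_sum, Fintype.card_fin] at this ⊢
    omega
  have hrestrict : (range (Sum.inl : Fin 2 → Fin 2 ⊕ Fin k)).domRestrict (Sum.elim e 0) =
      e ∘ (Equiv.ofInjective _ Sum.inl_injective).symm := by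
    funext ⟨_, i, rfl⟩
    simp
  obtain ⟨b, hb⟩ := Orthonormal.exists_orthonormalBasis_extension_of_card_eq hcard
    (hrestrict ▸ he.comp _ (Equiv.injective _))
  have hbe (i : Fin 2) : b (Sum.inl i) = e i := hb _ ⟨i, rfl⟩
  let Ψ : E ≃ᵐ ℂ × (Fin k → ℝ) :=
    b.measurableEquiv.trans <| (MeasurableEquiv.toLp 2 _).symm.trans <|
      (MeasurableEquiv.sumPiEquivProdPi fun _ => ℝ).trans <| MeasurableEquiv.prodCongr
        (MeasurableEquiv.finTwoArrow.trans Complex.measurableEquivRealProd.symm)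
        (MeasurableEquiv.refl _)
  have hΨ (x : E) :
      Ψ x = (⟨b.repr x (.inl 0), b.repr x (.inl 1)⟩, fun i => b.repr x (.inr i)) := rfl
  have hfst (x : E) : (Ψ x).1 = planeCoord e x := by
    simp [hΨ, planeCoord, ← hbe, OrthonormalBasis.repr_apply_apply]
  refine ⟨k, Ψ, ?_, fun x => ⟨hfst x, ?_⟩⟩
  · exact ((Complex.volume_preserving_equiv_real_prod.symm.comp
      (volume_preserving_finTwoArrow ℝ)).prod (MeasurePreserving.id _)).comp
      ((measurePreserving_sumPiEquivProdPi fun _ => volume).comp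
      ((EuclideanSpace.volume_preserving_symm_measurableEquiv_toLp _).comp
        b.measurePreserving_measurableEquiv))
  · rw [← hfst, ← b.repr.norm_map, EuclideanSpace.real_norm_sq_eq, Fintype.sum_sum_type,
      Fin.sum_univ_two, Complex.sq_norm, Complex.normSq_apply, hΨ]
    ring

theorem volume_preimage_planeCoord_inter_ball_div {e : Fin 2 → E} (he : Orthonormal ℝ e)
    {W : Set ℂ} (hWm : MeasurableSet W) (hW : ∀ c : ℝ, 0 < c → ∀ z ∈ W, c • z ∈ W) :
    volume (planeCoord e ⁻¹' W ∩ ball 0 1) / volume (ball (0 : E) 1) =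
      volume (W ∩ ball 0 1) / volume (ball (0 : ℂ) 1) := by
  obtain ⟨k, Ψ, hΨ, hΨx⟩ := exists_measurePreserving_planeCoord_prod he
  set J := ∫⁻ w : Fin k → ℝ, ENNReal.ofReal (√(1 - ∑ i, w i ^ 2) ^ Module.finrank ℝ ℂ)
  have hslice {V : Set ℂ} (hVm : MeasurableSet V) (hV : ∀ c : ℝ, 0 < c → ∀ z ∈ V, c • z ∈ V) :
      volume (planeCoord e ⁻¹' V ∩ ball 0 1) = volume (V ∩ ball 0 1) * J := by
    have hpre : planeCoord e ⁻¹' V ∩ ball 0 1 =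
        Ψ ⁻¹' {q | q.1 ∈ V ∧ ‖q.1‖ ^ 2 + ∑ i, q.2 i ^ 2 < 1} := by
      ext x
      simp [(hΨx x).1, ← (hΨx x).2, sq_lt_one_iff₀ (norm_nonneg x)]
    rw [hpre, hΨ.measure_preimage_equiv, Measure.volume_eq_prod,
      Measure.prod_setOf_mem_and_norm_sq_add_lt_one volume volume hVm hV
        (g := fun w : Fin k → ℝ => ∑ i, w i ^ 2) (by fun_prop)]
  have hball := hslice MeasurableSet.univ fun _ _ _ _ => trivial
  rw [preimage_univ, univ_inter, univ_inter] at hball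
  have hJ0 : J ≠ 0 := right_ne_zero_of_mul (hball ▸ (measure_ball_pos volume _ one_pos).ne')
  have hJtop : J ≠ ⊤ := by
    rintro hJ
    rw [hJ, ENNReal.mul_top (measure_ball_pos volume _ one_pos).ne'] at hball
    exact measure_ball_lt_top.ne hball
  rw [hslice hWm hW, hball, ENNReal.mul_div_mul_right _ _ hJ0 hJtop]

theorem MeasureTheory.Measure.addHaar_setOf_inner_eq_zero (μ : Measure E) [μ.IsAddHaarMeasure]
    {u : E} (hu : u ≠ 0) : μ {x | ⟪u, x⟫ = 0} = 0 := by
  have hker : {x : E | ⟪u, x⟫ = 0} = (ℝ ∙ u)ᗮ := by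
    ext x
    simp [Submodule.mem_orthogonal_singleton_iff_inner_right]
  rw [hker]
  refine μ.addHaar_submodule _ fun htop => hu ?_
  exact inner_self_eq_zero.mp (Submodule.mem_orthogonal_singleton_iff_inner_right.mp
    (htop ▸ Submodule.mem_top))

end PlaneCoord

section PlanarWedge

theorem cos_add_pos_iff {φ β : ℝ} (hφ : φ ∈ Ioo (-π) π) (hβ : |β| ≤ π / 2) :
    0 < cos (φ + β) ↔ φ ∈ Ioo (-(π / 2) - β) (π / 2 - β) := by
  obtain ⟨hφ₁, hφ₂⟩ := hφ
  obtain ⟨hβ₁, hβ₂⟩ := abs_le.mp hβ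
  refine ⟨fun h => ⟨?_, ?_⟩, fun ⟨h₁, h₂⟩ => cos_pos_of_mem_Ioo ⟨by linarith, by linarith⟩⟩
  · by_contra! hle
    have := cos_nonpos_of_pi_div_two_le_of_le (x := -(φ + β)) (by linarith) (by linarith)
    rw [cos_neg] at this
    linarith
  · by_contra! hle
    linarith [cos_nonpos_of_pi_div_two_le_of_le (x := φ + β) (by linarith) (by linarith)]

theorem volume_Ioo_symmDiff_Ioo {a b c d : ℝ} (hac : a ≤ c) (hcb : c < b) (hbd : b ≤ d) :
    volume (Ioo a b ∆ Ioo c d) = ENNReal.ofReal (c - a) + ENNReal.ofReal (d - b) := by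
  have hsplit : Ioo a b ∆ Ioo c d = Ioc a c ∪ Ico b d := by
    ext x
    simp only [mem_symmDiff, mem_Ioo, mem_union, mem_Ioc, mem_Ico]
    constructor
    · rintro (⟨⟨h₁, h₂⟩, h₃⟩ | ⟨⟨h₁, h₂⟩, h₃⟩)
      · exact Or.inl ⟨h₁, not_lt.mp fun h => h₃ ⟨h, by linarith⟩⟩
      · exact Or.inr ⟨not_lt.mp fun h => h₃ ⟨by linarith, h⟩, h₂⟩
    · rintro (⟨h₁, h₂⟩ | ⟨h₁, h₂⟩)
      · exact Or.inl ⟨⟨h₁, by linarith⟩, fun h => by linarith [h.1]⟩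
      · exact Or.inr ⟨⟨by linarith, h₂⟩, fun h => by linarith [h.2]⟩
  have hdisj : Disjoint (Ioc a c) (Ico b d) :=
    disjoint_left.mpr fun x h₁ h₂ => by linarith [h₁.2, h₂.1]
  rw [hsplit, measure_union hdisj measurableSet_Ico, Real.volume_Ioc, Real.volume_Ico]

theorem volume_inter_ball_of_polar {W : Set ℂ} (hWm : MeasurableSet W) {Φ : Set ℝ}
    (hΦm : MeasurableSet Φ) (hΦ : Φ ⊆ Ioo (-π) π)
    (hWΦ : ∀ ρ > 0, ∀ φ ∈ Ioo (-π) π, Complex.polarCoord.symm (ρ, φ) ∈ W ↔ φ ∈ Φ) :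
    volume (W ∩ ball 0 1) = volume Φ / 2 := by
  have hT : MeasurableSet (Ioo (0 : ℝ) 1 ×ˢ Φ) := measurableSet_Ioo.prod hΦm
  have hpolar : EqOn (fun p : ℝ × ℝ => ENNReal.ofReal p.1 •
        (W ∩ ball 0 1).indicator 1 (Complex.polarCoord.symm p))
      ((Ioo 0 1 ×ˢ Φ).indicator fun p => ENNReal.ofReal p.1) polarCoord.target := by
    rintro ⟨ρ, φ⟩ ⟨hρ, hφ⟩
    have hmem : Complex.polarCoord.symm (ρ, φ) ∈ W ∩ ball 0 1 ↔ (ρ, φ) ∈ Ioo 0 1 ×ˢ Φ := by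
      rw [mem_inter_iff, hWΦ ρ hρ φ hφ, mem_ball_zero_iff, Complex.norm_polarCoord_symm,
        abs_of_pos (mem_Ioi.mp hρ), mem_prod, mem_Ioo]
      exact ⟨fun ⟨h₁, h₂⟩ => ⟨⟨hρ, h₂⟩, h₁⟩, fun ⟨⟨_, h₂⟩, h₁⟩ => ⟨h₁, h₂⟩⟩
    by_cases h : (ρ, φ) ∈ Ioo 0 1 ×ˢ Φ
    · simp only [indicator_of_mem h, indicator_of_mem (hmem.mpr h), Pi.one_apply, smul_eq_mul,
        mul_one]
    · simp only [indicator_of_notMem h, indicator_of_notMem (mt hmem.mp h), smul_eq_mul, mul_zero]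
  have hradial : ∫⁻ ρ in Ioo (0 : ℝ) 1, ENNReal.ofReal ρ = 2⁻¹ := by
    rw [← ofReal_integral_eq_lintegral_ofReal, ← integral_Ioc_eq_integral_Ioo,
      ← intervalIntegral.integral_of_le zero_le_one, integral_id]
    · rw [show ((1 : ℝ) ^ 2 - 0 ^ 2) / 2 = 2⁻¹ by norm_num, ENNReal.ofReal_inv_of_pos two_pos,
        ENNReal.ofReal_ofNat]
    · exact continuous_id.integrableOn_Icc.mono_set Ioo_subset_Icc_self
    · exact (ae_restrict_iff' measurableSet_Ioo).mpr (.of_forall fun x hx => hx.1.le)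
  calc volume (W ∩ ball 0 1)
      = ∫⁻ z, (W ∩ ball 0 1).indicator 1 z :=
        (lintegral_indicator_one (hWm.inter measurableSet_ball)).symm
    _ = ∫⁻ p in polarCoord.target,
          ENNReal.ofReal p.1 • (W ∩ ball 0 1).indicator 1 (Complex.polarCoord.symm p) :=
        (Complex.lintegral_comp_polarCoord_symm _).symm
    _ = ∫⁻ p in Ioo 0 1 ×ˢ Φ, ENNReal.ofReal p.1 := by
        rw [setLIntegral_congr_fun polarCoord.open_target.measurableSet hpolar,
          lintegral_indicator hT, Measure.restrict_restrict hT,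
          inter_eq_left.mpr (show Ioo 0 1 ×ˢ Φ ⊆ polarCoord.target from
            prod_mono Ioo_subset_Ioi_self hΦ)]
    _ = (∫⁻ ρ in Ioo 0 1, ENNReal.ofReal ρ) * volume Φ := by
        rw [Measure.volume_eq_prod, ← Measure.prod_restrict]
        simpa using lintegral_prod_mul (μ := volume.restrict (Ioo (0 : ℝ) 1))
          (ν := volume.restrict Φ) (f := ENNReal.ofReal) (g := 1)
          ENNReal.measurable_ofReal.aemeasurable aemeasurable_const
    _ = volume Φ / 2 := by rw [hradial, ENNReal.div_eq_inv_mul]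

theorem polarCoord_symm_mem_disagreementCone_iff {α ρ φ : ℝ} (hα₀ : 0 ≤ α) (hα : α ≤ π / 2)
    (hρ : 0 < ρ) (hφ : φ ∈ Ioo (-π) π) :
    Complex.polarCoord.symm (ρ, φ) ∈ disagreementCone (⟨cos α, -sin α⟩ : ℂ) ⟨cos α, sin α⟩ ↔
      φ ∈ Ioo (-(π / 2) - α) (π / 2 - α) ∆ Ioo (-(π / 2) + α) (π / 2 + α) := by
  have ha : ⟪(⟨cos α, -sin α⟩ : ℂ), Complex.polarCoord.symm (ρ, φ)⟫ = ρ * cos (φ + α) := by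
    simp [Complex.inner, Complex.cos_ofReal_re, Complex.sin_ofReal_re, cos_add]
    ring
  have hb : ⟪(⟨cos α, sin α⟩ : ℂ), Complex.polarCoord.symm (ρ, φ)⟫ = ρ * cos (φ + -α) := by
    simp [Complex.inner, Complex.cos_ofReal_re, Complex.sin_ofReal_re, cos_add]
    ring
  have hα' : |α| ≤ π / 2 := by rwa [abs_of_nonneg hα₀]
  rw [disagreementCone, mem_ofPred_eq, ha, hb, sgn_mul_of_pos hρ, sgn_mul_of_pos hρ,
    sgn_ne_sgn_iff, cos_add_pos_iff hφ hα', cos_add_pos_iff hφ (by rwa [abs_neg]), sub_neg_eq_add,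
    sub_neg_eq_add]
  rfl

theorem volume_disagreementCone_inter_ball {α : ℝ} (hα₀ : 0 ≤ α) (hα : α < π / 2) :
    volume (disagreementCone (⟨cos α, -sin α⟩ : ℂ) ⟨cos α, sin α⟩ ∩ ball 0 1) =
      ENNReal.ofReal (2 * α) := by
  have hsub : Ioo (-(π / 2) - α) (π / 2 - α) ∆ Ioo (-(π / 2) + α) (π / 2 + α) ⊆ Ioo (-π) π :=
    symmDiff_subset_union.trans <| union_subset (Ioo_subset_Ioo (by linarith) (by linarith))
      (Ioo_subset_Ioo (by linarith) (by linarith))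
  rw [volume_inter_ball_of_polar (measurableSet_disagreementCone _ _)
      (measurableSet_Ioo.symmDiff measurableSet_Ioo) hsub
      fun ρ hρ φ hφ => polarCoord_symm_mem_disagreementCone_iff hα₀ hα.le hρ hφ,
    volume_Ioo_symmDiff_Ioo (by linarith) (by linarith) (by linarith),
    ← ENNReal.ofReal_add (by linarith) (by linarith), ← ENNReal.ofReal_ofNat 2,
    ← ENNReal.ofReal_div_of_pos two_pos]
  congr 1
  ring

end PlanarWedge

theorem sign_disagreement_prob_general (d : ℕ)
    (u v : EuclideanSpace ℝ (Fin d)) (hu : u ≠ 0) (hv : v ≠ 0) :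
    uniformSphere d
      {x | sgn (inner ℝ u (x : EuclideanSpace ℝ (Fin d))) ≠
            sgn (inner ℝ v (x : EuclideanSpace ℝ (Fin d)))}
      = ENNReal.ofReal (angle u v / Real.pi) := by
  have hd : d ≠ 0 := by
    rintro rfl
    exact hu (Subsingleton.elim _ _)
  change uniformSphere d ((↑) ⁻¹' disagreementCone u v) = _
  rw [uniformSphere_preimage_of_cone hd (measurableSet_disagreementCone u v)
    (fun c hc x hx => smul_mem_disagreementCone hc hx) (zero_notMem_disagreementCone u v)]
  rcases (angle_nonneg u v).eq_or_lt with h₀ | h₀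
  · obtain ⟨-, r, hr, rfl⟩ := angle_eq_zero_iff.mp h₀.symm
    simp [disagreementCone_smul_of_pos u hr, ← h₀]
  rcases (angle_le_pi u v).eq_or_lt with hπ | hπ
  · obtain ⟨-, r, hr, rfl⟩ := angle_eq_pi_iff.mp hπ
    rw [disagreementCone_smul_of_neg u hr, hπ, div_self pi_ne_zero, ENNReal.ofReal_one, inter_comm,
      measure_inter_conull (by simpa only [compl_ofPred, not_not] using
        volume.addHaar_setOf_inner_eq_zero hu),
      ENNReal.div_self (measure_ball_pos volume _ one_pos).ne' measure_ball_lt_top.ne]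
  obtain ⟨e, he, hcone⟩ := exists_disagreementCone_eq_preimage_planeCoord hu hv h₀ hπ
  rw [hcone, volume_preimage_planeCoord_inter_ball_div he (measurableSet_disagreementCone _ _)
      (fun c hc z hz => smul_mem_disagreementCone hc hz),
    volume_disagreementCone_inter_ball (by linarith) (by linarith), Complex.volume_ball,
    ENNReal.ofReal_one, one_pow, one_mul, mul_div_cancel₀ _ two_ne_zero,
    ENNReal.ofReal_div_of_pos pi_pos, ← NNReal.coe_real_pi, ENNReal.ofReal_coe_nnreal]

/-- Hyperplane rounding: the probability that `sign (u ⬝ x) ≠ sign (v ⬝ x)` for a uniformly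
random unit vector `x` equals `θ/π`, where `θ` is the angle between `u` and `v`. -/
theorem sign_disagreement_prob (d : ℕ) (hd : 2 ≤ d)
    (u v : EuclideanSpace ℝ (Fin d)) (hu : u ≠ 0) (hv : v ≠ 0) :
    uniformSphere d
      {x | sgn (inner ℝ u (x : EuclideanSpace ℝ (Fin d))) ≠
            sgn (inner ℝ v (x : EuclideanSpace ℝ (Fin d)))}
      = ENNReal.ofReal (angle u v / Real.pi) :=
  sign_disagreement_prob_general d u v hu hv
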